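/- Let M be a unitary projective co-representation of G of dimension n with factor system ω, and let 𝒬 be the set of Hermitian n×n matrices Q satisfying M(g)·Q^{σ(g)} = Q·M(g) for all g ∈ G. Then 𝒬 is a vector space over ℝ, and its real dimension (the intertwining number I(V,V)) is given by I(V,V) = (1/(2|H|))·Σ_{h∈H} [ χ(h)·conj(χ(h)) + ω(T0·h, T0·h)·χ((T0·h)²) ]; in particular, this expression is a nonnegative integer. -/

import Mathlib

open Matrix Complex BigOperators

noncomputable section

def mconj {ι : Type*} (u : ℤˣ) (X : Matrix ι ι ℂ) : Matrix ι ι ℂ :=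
  if u = 1 then X else X.map (starRingEnd ℂ)

def vconj {ι : Type*} (u : ℤˣ) (v : ι → ℂ) : ι → ℂ :=
  if u = 1 then v else star v

lemma mconj_add {ι : Type*} (u : ℤˣ) (A B : Matrix ι ι ℂ) :
    mconj u (A + B) = mconj u A + mconj u B := by
  unfold mconj; split
  · rfl
  · ext i j; simp

lemma mconj_real_smul {ι : Type*} (u : ℤˣ) (r : ℝ) (A : Matrix ι ι ℂ) :
    mconj u (r • A) = r • mconj u A := by
  unfold mconj; split
  · rfl
  · ext i j; simp

structure IsCoRep {G : Type*} [Group G] {ι : Type*} [Fintype ι] [DecidableEq ι] (s : G →* ℤˣ)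
    (M : G → Matrix ι ι ℂ) (ω : G → G → ℂ) : Prop where
  isUnit : ∀ g, IsUnit (M g)
  omega_norm : ∀ g1 g2, ‖ω g1 g2‖ = 1
  mul_eq : ∀ g1 g2, M g1 * mconj (s g1) (M g2) = ω g1 g2 • M (g1 * g2)

structure IsUnitaryCoRep {G : Type*} [Group G] {ι : Type*} [Fintype ι] [DecidableEq ι]
    (s : G →* ℤˣ) (M : G → Matrix ι ι ℂ) (ω : G → G → ℂ) extends IsCoRep s M ω : Prop where
  unitary : ∀ g, M g ∈ Matrix.unitaryGroup ι ℂ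

/-- The real vector space `𝒬` of Hermitian matrices commuting with all operators
`ρ(g)` of the co-representation. -/
def QSpace {G : Type*} [Group G] {ι : Type*} [Fintype ι] [DecidableEq ι] (s : G →* ℤˣ)
    (M : G → Matrix ι ι ℂ) : Submodule ℝ (Matrix ι ι ℂ) where
  carrier := {Q | Q.IsHermitian ∧ ∀ g, M g * mconj (s g) Q = Q * M g}
  add_mem' := by
    rintro A B ⟨hA1, hA2⟩ ⟨hB1, hB2⟩
    refine ⟨hA1.add hB1, fun g => ?_⟩
    rw [mconj_add, mul_add, add_mul, hA2 g, hB2 g]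
  zero_mem' := by
    refine ⟨Matrix.isHermitian_zero, fun g => ?_⟩
    unfold mconj; split <;> simp
  smul_mem' := by
    rintro c A ⟨hA1, hA2⟩
    refine ⟨?_, fun g => ?_⟩
    · rw [Matrix.IsHermitian] at *
      rw [Matrix.conjTranspose_smul, hA1]
      simp
    · rw [mconj_real_smul, mul_smul_comm, hA2 g, smul_mul_assoc]

/-!
Conjugation `Q ↦ ρ(g) Q ρ(g)⁻¹` is a genuine real representation of `G` on complex matrices
(the factor system cancels because `|ω| = 1`), and it commutes with `Q ↦ Qᴴ`. Together they give
a representation of `G × ℤˣ` whose invariants are exactly `𝒬`, so `dim_ℝ 𝒬` is the average of its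
character. Computing real traces entry by entry on the basis `{E_ij, i E_ij}`: `Q ↦ A Q B` has
trace `2 Re (tr A tr B)`, `Q ↦ A Qᵀ B` has trace `2 Re tr (A Bᵀ)`, and the conjugate-linear
variants have trace `0`. Hence a unitary `h` contributes `2 |χ(h)|²` and an anti-unitary `g`
contributes `2 tr (M(g) conj (M(g))) = 2 ω(g,g) χ(g²)`; pairing `h ∈ H` with `T0 h` gives the formula.
-/

section Mconj

variable {ι : Type*}

theorem mconj_one (X : Matrix ι ι ℂ) : mconj 1 X = X := if_pos rfl

theorem mconj_neg_one (X : Matrix ι ι ℂ) : mconj (-1) X = X.map (starRingEnd ℂ) :=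
  if_neg (by decide)

theorem mconj_mconj (u v : ℤˣ) (A : Matrix ι ι ℂ) : mconj u (mconj v A) = mconj (u * v) A := by
  rcases Int.units_eq_one_or u with rfl | rfl <;> rcases Int.units_eq_one_or v with rfl | rfl <;>
    simp [mconj_one, mconj_neg_one, Matrix.map_map, Function.comp_def]

theorem conjTranspose_mconj (u : ℤˣ) (A : Matrix ι ι ℂ) : (mconj u A)ᴴ = mconj u Aᴴ := by
  rcases Int.units_eq_one_or u with rfl | rfl <;> simp [mconj_one, mconj_neg_one]
  ext i j
  simp

theorem mconj_neg_one_single [DecidableEq ι] (i j : ι) (c : ℂ) :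
    mconj (-1) (Matrix.single i j c) = Matrix.single i j (starRingEnd ℂ c) := by
  ext a b
  simp only [mconj_neg_one, Matrix.map_apply, Matrix.single_apply]
  split_ifs <;> simp

theorem mconj_mul [Fintype ι] (u : ℤˣ) (A B : Matrix ι ι ℂ) :
    mconj u (A * B) = mconj u A * mconj u B := by
  rcases Int.units_eq_one_or u with rfl | rfl <;> simp [mconj_one, mconj_neg_one]

end Mconj

namespace Matrix

variable {ι : Type*}

variable (ι) in
def conjTransposeRep : Representation ℝ ℤˣ (Matrix ι ι ℂ) where
  toFun u := if u = 1 then LinearMap.id else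
    { toFun := conjTranspose
      map_add' := conjTranspose_add
      map_smul' := fun r Q => by ext; simp }
  map_one' := if_pos rfl
  map_mul' u v := by
    rcases Int.units_eq_one_or u with rfl | rfl <;> rcases Int.units_eq_one_or v with rfl | rfl <;>
      ext : 1 <;> simp

@[simp]
theorem conjTransposeRep_neg_one_apply (Q : Matrix ι ι ℂ) : conjTransposeRep ι (-1) Q = Qᴴ := by
  simp [conjTransposeRep]

variable [Fintype ι]

theorem mul_single_mul_apply [DecidableEq ι] (A B : Matrix ι ι ℂ) (i j k l : ι) (c : ℂ) :
    (A * single i j c * B) k l = A k i * c * B j l := by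
  simp [mul_apply, single_apply, ite_and]

theorem trace_mul_map_conj (A : Matrix ι ι ℂ) :
    (A * A.map (starRingEnd ℂ)).trace = ∑ i, ∑ j, A i j * starRingEnd ℂ (A j i) := by
  simp [trace, mul_apply]

theorem conj_trace_mul_map_conj (A : Matrix ι ι ℂ) :
    starRingEnd ℂ (A * A.map (starRingEnd ℂ)).trace = (A * A.map (starRingEnd ℂ)).trace := by
  simp only [trace_mul_map_conj, map_sum, map_mul, Complex.conj_conj]
  rw [Finset.sum_comm]
  simp only [mul_comm]

section RealTrace

variable [DecidableEq ι]

theorem trace_realLinearMap_eq_sum_single (f : Matrix ι ι ℂ →ₗ[ℝ] Matrix ι ι ℂ) :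
    LinearMap.trace ℝ _ f =
      ∑ i, ∑ j, ((f (single i j 1) i j).re + (f (single i j I) i j).im) := by
  have repr_apply (X : Matrix ι ι ℂ) (i j : ι) : (stdBasis ℂ ι ι).repr X (i, j) = X i j := by
    simp [stdBasis]
  rw [LinearMap.trace_eq_matrix_trace ℝ (basisOneI.smulTower (stdBasis ℂ ι ι)), trace]
  simp [LinearMap.toMatrix_apply, Fintype.sum_prod_type, Fin.sum_univ_two, stdBasis_eq_single,
    repr_apply, smul_single, Finset.sum_add_distrib]

theorem trace_realLinearMap_eq_of_single_apply (f : Matrix ι ι ℂ →ₗ[ℝ] Matrix ι ι ℂ)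
    (a : ι → ι → ℂ) (h : ∀ i j c, f (single i j c) i j = a i j * c) :
    LinearMap.trace ℝ _ f = 2 * (∑ i, ∑ j, a i j).re := by
  simp [trace_realLinearMap_eq_sum_single, h, Complex.re_sum, Finset.mul_sum, two_mul]

theorem trace_realLinearMap_eq_zero_of_single_apply_conj (f : Matrix ι ι ℂ →ₗ[ℝ] Matrix ι ι ℂ)
    (a : ι → ι → ℂ) (h : ∀ i j c, f (single i j c) i j = a i j * starRingEnd ℂ c) :
    LinearMap.trace ℝ _ f = 0 := by
  simp [trace_realLinearMap_eq_sum_single, h]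

end RealTrace

end Matrix

namespace MonoidHom

variable {G : Type*} [Group G] [Fintype G] (s : G →* ℤˣ) {T₀ : G}

theorem sum_eq_sum_filter_one_add_mul {α : Type*} [AddCommMonoid α] (hT₀ : s T₀ = -1)
    (f : G → α) : ∑ g, f g = ∑ h ∈ Finset.univ.filter (fun h => s h = 1), (f h + f (T₀ * h)) := by
  rw [Finset.sum_add_distrib,
    ← Finset.sum_filter_add_sum_filter_not Finset.univ (fun g => s g = 1)]
  congr 1
  refine Finset.sum_nbij' (T₀⁻¹ * ·) (T₀ * ·) ?_ ?_ (fun _ _ => mul_inv_cancel_left _ _)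
    (fun _ _ => inv_mul_cancel_left _ _) (fun _ _ => by rw [mul_inv_cancel_left])
  · intro g hg
    have hg' : s g = -1 := Int.units_ne_iff_eq_neg.mp (by simpa using hg)
    simp [hT₀, hg']
  · simp [hT₀, Int.units_ne_iff_eq_neg]

theorem card_eq_two_mul_card_filter_one (hT₀ : s T₀ = -1) :
    Fintype.card G = 2 * (Finset.univ.filter (fun h => s h = 1)).card := by
  have h := s.sum_eq_sum_filter_one_add_mul hT₀ (fun _ => 1)
  simp only [Finset.sum_const, Finset.card_univ, smul_eq_mul, mul_one] at h
  rw [h, mul_comm]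

end MonoidHom

namespace IsUnitaryCoRep

open Matrix

variable {G : Type*} [Group G] {ι : Type*} [Fintype ι] [DecidableEq ι]
  {s : G →* ℤˣ} {M : G → Matrix ι ι ℂ} {ω : G → G → ℂ}

theorem conjTranspose_mul_self (hM : IsUnitaryCoRep s M ω) (g : G) : (M g)ᴴ * M g = 1 :=
  mem_unitaryGroup_iff'.mp (hM.unitary g)

theorem mul_conjTranspose_self (hM : IsUnitaryCoRep s M ω) (g : G) : M g * (M g)ᴴ = 1 :=
  mem_unitaryGroup_iff.mp (hM.unitary g)

theorem factor_mul_conj (hM : IsUnitaryCoRep s M ω) (g₁ g₂ : G) :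
    ω g₁ g₂ * starRingEnd ℂ (ω g₁ g₂) = 1 := by
  simp [Complex.mul_conj, Complex.normSq_eq_norm_sq, hM.omega_norm]

theorem apply_one (hM : IsUnitaryCoRep s M ω) : M 1 = ω 1 1 • 1 := by
  have h := hM.mul_eq 1 1
  rw [map_one, mconj_one, _root_.mul_one] at h
  exact (hM.isUnit 1).mul_right_cancel (by rw [smul_mul_assoc, Matrix.one_mul, h])

/-- The action `Q ↦ ρ(g) Q ρ(g)⁻¹` on operators. -/
def conjRep (hM : IsUnitaryCoRep s M ω) : Representation ℝ G (Matrix ι ι ℂ) where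
  toFun g :=
    { toFun Q := M g * mconj (s g) Q * (M g)ᴴ
      map_add' A B := by rw [mconj_add, Matrix.mul_add, Matrix.add_mul]
      map_smul' r A := by rw [mconj_real_smul, RingHom.id_apply, mul_smul_comm, smul_mul_assoc] }
  map_one' := by
    ext1 Q
    simp only [LinearMap.coe_mk, AddHom.coe_mk, map_one, mconj_one, Module.End.one_apply,
      hM.apply_one, conjTranspose_smul, conjTranspose_one, smul_mul_assoc, mul_smul_comm,
      Matrix.one_mul, Matrix.mul_one, smul_smul]
    rw [Complex.star_def, mul_comm, hM.factor_mul_conj, one_smul]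
  map_mul' g₁ g₂ := by
    ext1 Q
    have h := hM.mul_eq g₁ g₂
    calc M (g₁ * g₂) * mconj (s (g₁ * g₂)) Q * (M (g₁ * g₂))ᴴ
        = (ω g₁ g₂ * starRingEnd ℂ (ω g₁ g₂)) •
            (M (g₁ * g₂) * mconj (s (g₁ * g₂)) Q * (M (g₁ * g₂))ᴴ) := by
          rw [hM.factor_mul_conj, one_smul]
      _ = (M g₁ * mconj (s g₁) (M g₂)) * mconj (s g₁ * s g₂) Q *
            (M g₁ * mconj (s g₁) (M g₂))ᴴ := by
          rw [h, map_mul, conjTranspose_smul, smul_mul_assoc, smul_mul_assoc, mul_smul_comm,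
            smul_smul]
          rfl
      _ = M g₁ * mconj (s g₁) (M g₂ * mconj (s g₂) Q * (M g₂)ᴴ) * (M g₁)ᴴ := by
          rw [mconj_mul, mconj_mul, mconj_mconj, ← conjTranspose_mconj, conjTranspose_mul]
          noncomm_ring

theorem conjRep_apply (hM : IsUnitaryCoRep s M ω) (g : G) (Q : Matrix ι ι ℂ) :
    hM.conjRep g Q = M g * mconj (s g) Q * (M g)ᴴ := rfl

theorem conjRep_apply_eq_self_iff (hM : IsUnitaryCoRep s M ω) (g : G) (Q : Matrix ι ι ℂ) :
    hM.conjRep g Q = Q ↔ M g * mconj (s g) Q = Q * M g := by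
  rw [conjRep_apply]
  constructor
  · intro h
    rw [← Matrix.mul_one (M g * _), ← hM.conjTranspose_mul_self g, ← Matrix.mul_assoc, h]
  · intro h
    rw [h, Matrix.mul_assoc, hM.mul_conjTranspose_self, Matrix.mul_one]

theorem commute_conjRep_conjTransposeRep (hM : IsUnitaryCoRep s M ω) (g : G) (u : ℤˣ) :
    Commute (hM.conjRep g) (conjTransposeRep ι u) := by
  rcases Int.units_eq_one_or u with rfl | rfl
  · simp
  · ext1 Q
    simp [conjRep_apply, conjTranspose_mconj, Matrix.mul_assoc]

def qRep (hM : IsUnitaryCoRep s M ω) : Representation ℝ (G × ℤˣ) (Matrix ι ι ℂ) :=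
  hM.conjRep.noncommCoprod (conjTransposeRep ι) hM.commute_conjRep_conjTransposeRep

theorem qSpace_eq_invariants (hM : IsUnitaryCoRep s M ω) : QSpace s M = hM.qRep.invariants := by
  ext Q
  simp only [QSpace, Submodule.mem_mk, AddSubmonoid.mem_mk, AddSubsemigroup.mem_mk,
    Set.mem_ofPred_eq, Representation.mem_invariants, Prod.forall, qRep,
    MonoidHom.noncommCoprod_apply, Module.End.mul_apply, ← hM.conjRep_apply_eq_self_iff]
  constructor
  · rintro ⟨hQ, hg⟩ g u
    rcases Int.units_eq_one_or u with rfl | rfl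
    · simpa using hg g
    · simpa [hQ.eq] using hg g
  · intro h
    exact ⟨(by simpa using h 1 (-1) : Qᴴ = Q), fun g => by simpa using h g 1⟩

theorem finrank_qSpace [Fintype G] (hM : IsUnitaryCoRep s M ω) :
    (Module.finrank ℝ (QSpace s M) : ℝ) =
      (2 * Fintype.card G : ℝ)⁻¹ * ∑ g, ∑ u, hM.qRep.character (g, u) := by
  have : Invertible (Nat.card (G × ℤˣ) : ℝ) := invertibleOfNonzero (by simp)
  rw [hM.qSpace_eq_invariants, ← Representation.card_inv_mul_sum_char_eq_finrank, Nat.card_prod,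
    Nat.card_eq_fintype_card, Nat.card_eq_fintype_card, Fintype.card_units_int,
    Fintype.sum_prod_type]
  push_cast
  ring

theorem sum_character_qRep (hM : IsUnitaryCoRep s M ω) (g : G) :
    ∑ u, hM.qRep.character (g, u) = LinearMap.trace ℝ _ (hM.conjRep g) +
      LinearMap.trace ℝ _ (hM.conjRep g ∘ₗ conjTransposeRep ι (-1)) := by
  simp [Representation.character, qRep, Module.End.mul_eq_comp, Module.End.one_eq_id]

theorem sum_character_qRep_of_unitary (hM : IsUnitaryCoRep s M ω) {g : G} (hg : s g = 1) :
    ((∑ u, hM.qRep.character (g, u) : ℝ) : ℂ) =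
      2 * ((M g).trace * starRingEnd ℂ (M g).trace) := by
  rw [sum_character_qRep,
    trace_realLinearMap_eq_of_single_apply _ (fun i j => M g i i * starRingEnd ℂ (M g j j)),
    trace_realLinearMap_eq_zero_of_single_apply_conj _
      (fun i j => M g i j * starRingEnd ℂ (M g j i))]
  · have hsum : ∑ i, ∑ j, M g i i * starRingEnd ℂ (M g j j) =
        (M g).trace * starRingEnd ℂ (M g).trace := by
      simp only [Matrix.trace, diag_apply, map_sum, Finset.sum_mul_sum]
    rw [hsum, Complex.mul_conj]
    simp
  all_goals
    intro i j c
    simp [conjRep_apply, hg, mconj_one, mul_single_mul_apply]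
    ring

theorem sum_character_qRep_of_antiunitary (hM : IsUnitaryCoRep s M ω) {g : G} (hg : s g = -1) :
    ((∑ u, hM.qRep.character (g, u) : ℝ) : ℂ) = 2 * (ω g g * (M (g * g)).trace) := by
  rw [sum_character_qRep,
    trace_realLinearMap_eq_zero_of_single_apply_conj _
      (fun i j => M g i i * starRingEnd ℂ (M g j j)),
    trace_realLinearMap_eq_of_single_apply _ (fun i j => M g i j * starRingEnd ℂ (M g j i))]
  · have h := hM.mul_eq g g
    rw [hg, mconj_neg_one] at h
    rw [zero_add, ← trace_mul_map_conj]
    push_cast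
    rw [Complex.conj_eq_iff_re.mp (conj_trace_mul_map_conj _), h, trace_smul, smul_eq_mul]
  all_goals
    intro i j c
    simp [conjRep_apply, hg, mconj_neg_one_single, mul_single_mul_apply]
    ring

end IsUnitaryCoRep

theorem intertwining_number_formula_general {G : Type*} [Group G] [Fintype G]
    (s : G →* ℤˣ)
    (T0 : G) (hT0 : s T0 = -1)
    {n : ℕ}
    (M : G → Matrix (Fin n) (Fin n) ℂ) (ω : G → G → ℂ)
    (hM : IsUnitaryCoRep s M ω) :
    (Module.finrank ℝ (QSpace s M) : ℂ) =
      (1 / (2 * ((Finset.univ.filter (fun h : G => s h = 1)).card : ℂ))) *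
        ∑ h ∈ Finset.univ.filter (fun h : G => s h = 1),
          ((M h).trace * (starRingEnd ℂ) ((M h).trace) +
            ω (T0 * h) (T0 * h) * (M ((T0 * h) * (T0 * h))).trace) := by
  set H := Finset.univ.filter (fun h : G => s h = 1)
  have hH : (H.card : ℂ) ≠ 0 :=
    Nat.cast_ne_zero.mpr (Finset.card_ne_zero_of_mem (a := 1) (by simp [H]))
  have hG : (Fintype.card G : ℂ) = 2 * H.card := by
    exact_mod_cast s.card_eq_two_mul_card_filter_one hT0
  have hpair : ∀ h ∈ H,
      ((∑ u, hM.qRep.character (h, u) + ∑ u, hM.qRep.character (T0 * h, u) : ℝ) : ℂ) =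
        2 * ((M h).trace * (starRingEnd ℂ) ((M h).trace) +
          ω (T0 * h) (T0 * h) * (M ((T0 * h) * (T0 * h))).trace) := by
    intro h hh
    have hsh : s h = 1 := by simpa [H] using hh
    rw [Complex.ofReal_add, hM.sum_character_qRep_of_unitary hsh,
      hM.sum_character_qRep_of_antiunitary (by simp [hT0, hsh]), mul_add]
  rw [← Complex.ofReal_natCast, hM.finrank_qSpace, s.sum_eq_sum_filter_one_add_mul hT0,
    Complex.ofReal_mul, Complex.ofReal_sum, Finset.sum_congr rfl hpair, ← Finset.mul_sum]
  push_cast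
  rw [hG]
  field_simp

/-- the intertwining number `I(V,V) = dim_ℝ 𝒬` is given by
`(1/(2|H|))·Σ_{h∈H}[χ(h)·conj(χ(h)) + ω(T0·h,T0·h)·χ((T0·h)²)]`. -/
theorem intertwining_number_formula {G : Type*} [Group G] [Fintype G] [DecidableEq G]
    (s : G →* ℤˣ) (hs : Function.Surjective s)
    (T0 : G) (hT0 : s T0 = -1)
    {n : ℕ}
    (M : G → Matrix (Fin n) (Fin n) ℂ) (ω : G → G → ℂ)
    (hM : IsUnitaryCoRep s M ω) :
    (Module.finrank ℝ (QSpace s M) : ℂ) =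
      (1 / (2 * ((Finset.univ.filter (fun h : G => s h = 1)).card : ℂ))) *
        ∑ h ∈ Finset.univ.filter (fun h : G => s h = 1),
          ((M h).trace * (starRingEnd ℂ) ((M h).trace) +
            ω (T0 * h) (T0 * h) * (M ((T0 * h) * (T0 * h))).trace) :=
  intertwining_number_formula_general s T0 hT0 M ω hM

end
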